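/- Let (X,μ) be a probability space and f ∈ L^∞(X,μ)⁺, h ∈ L^∞(X,μ)⁺ with f ≤ h a.e. and v a real number with ∫_X f dμ ≤ v ≤ ∫_X h dμ. Let c = c(v) be the unique level with ∫_X max{f,c} dμ = v. Then max{f, c} ≺_w h (the waterfilling of f at level c is submajorized by h). -/

import Mathlib

/-!
Write `g = max f c`. On `[0, 1)` the rearrangement satisfies `g* = max f* c`, and `f ≤ h` a.e.
gives `f* ≤ h*`, so `g* ≤ h*` wherever `h* ≥ c`. Since `h*` is decreasing, `h* ≥ c` on an initial
segment and `h* < c ≤ g*` after it. Hence `r ↦ ∫₀ʳ (h* - g*)` increases from `0` on that segment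
and decreases afterwards to `∫ h - v ≥ 0` (by the layer-cake formula, `∫₀¹ g* = ∫ g = v` and
`∫₀¹ h* = ∫ h`), so it is nonnegative throughout.
-/

open MeasureTheory

/-- The decreasing rearrangement of `f` with respect to `μ`:
`f*(s) = sup { t ≥ 0 : μ{x : f(x) > t} > s }`. -/
noncomputable def decRe {X : Type*} [MeasurableSpace X] (μ : Measure X) (f : X → ℝ) (s : ℝ) : ℝ :=
  sSup {t : ℝ | 0 ≤ t ∧ s < (μ {x | t < f x}).toReal}

/-- Submajorization `g ≺_w f` of functions on a measure space. -/
def SubMaj {X : Type*} [MeasurableSpace X] (μ : Measure X) (g f : X → ℝ) : Prop :=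
  ∀ s ∈ Set.Icc (0 : ℝ) 1, ∫ t in (0 : ℝ)..s, decRe μ g t ≤ ∫ t in (0 : ℝ)..s, decRe μ f t

/-- Majorization `g ≺ f` of functions on a measure space. -/
def MajF {X : Type*} [MeasurableSpace X] (μ : Measure X) (g f : X → ℝ) : Prop :=
  SubMaj μ g f ∧ (∫ t in (0 : ℝ)..1, decRe μ g t) = ∫ t in (0 : ℝ)..1, decRe μ f t

open Set

theorem intervalIntegral_le_of_le_max_of_antitoneOn {φ ψ : ℝ → ℝ} {c r : ℝ}
    (hφ : IntervalIntegrable φ volume 0 1) (hψ : IntervalIntegrable ψ volume 0 1)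
    (hψ_anti : AntitoneOn ψ (Ioo 0 1)) (hcφ : ∀ s ∈ Ioo 0 1, c ≤ φ s)
    (hφψ : ∀ s ∈ Ioo 0 1, φ s ≤ max (ψ s) c) (htotal : ∫ s in 0..1, φ s ≤ ∫ s in 0..1, ψ s)
    (hr : r ∈ Icc 0 1) : ∫ s in 0..r, φ s ≤ ∫ s in 0..r, ψ s := by
  obtain ⟨hr0, hr1⟩ := hr
  have h0r : uIcc 0 r ⊆ uIcc (0 : ℝ) 1 := uIcc_subset_uIcc left_mem_uIcc (mem_uIcc_of_le hr0 hr1)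
  have hr1' : uIcc r 1 ⊆ uIcc (0 : ℝ) 1 := uIcc_subset_uIcc (mem_uIcc_of_le hr0 hr1) right_mem_uIcc
  by_cases hcψ : ∀ s ∈ Ioo 0 r, c ≤ ψ s
  · refine intervalIntegral.integral_mono_on_of_le_Ioo hr0 (hφ.mono_set h0r) (hψ.mono_set h0r)
      fun s hs => ?_
    have hs1 : s ∈ Ioo 0 1 := ⟨hs.1, hs.2.trans_le hr1⟩
    exact (hφψ s hs1).trans_eq (max_eq_left (hcψ s hs))
  · push Not at hcψ
    obtain ⟨s', hs', hψs'⟩ := hcψ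
    have htail : ∫ s in r..1, ψ s ≤ ∫ s in r..1, φ s :=
      intervalIntegral.integral_mono_on_of_le_Ioo hr1 (hψ.mono_set hr1') (hφ.mono_set hr1')
        fun s hs => by
          have hs1 : s ∈ Ioo 0 1 := ⟨hr0.trans_lt hs.1, hs.2⟩
          exact ((hψ_anti ⟨hs'.1, hs'.2.trans_le hr1⟩ hs1 (hs'.2.trans hs.1).le).trans
            hψs'.le).trans (hcφ s hs1)
    have hsplit (F : ℝ → ℝ) (hF : IntervalIntegrable F volume 0 1) :
        (∫ s in 0..r, F s) + ∫ s in r..1, F s = ∫ s in 0..1, F s :=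
      intervalIntegral.integral_add_adjacent_intervals (hF.mono_set h0r) (hF.mono_set hr1')
    linarith [hsplit φ hφ, hsplit ψ hψ]

theorem exists_gt_lt_measure_setOf_lt {X : Type*} [MeasurableSpace X] {μ : Measure X}
    {f : X → ℝ} {t : ℝ} {m : ENNReal} (h : m < μ {x | t < f x}) :
    ∃ t' > t, m < μ {x | t' < f x} := by
  have hmono : Monotone fun n : ℕ => {x | t + 1 / ((n : ℝ) + 1) < f x} :=
    fun i j hij x hx => by
      have : t + 1 / ((j : ℝ) + 1) ≤ t + 1 / ((i : ℝ) + 1) := by gcongr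
      exact this.trans_lt hx
  have hunion : ⋃ n : ℕ, {x | t + 1 / ((n : ℝ) + 1) < f x} = {x | t < f x} := by
    ext x
    simp only [mem_iUnion, mem_ofPred_eq]
    constructor
    · rintro ⟨n, hn⟩
      have : (0 : ℝ) < 1 / ((n : ℝ) + 1) := by positivity
      linarith
    · intro hx
      obtain ⟨n, hn⟩ := exists_nat_one_div_lt (sub_pos.2 hx)
      exact ⟨n, by linarith⟩
  rw [← hunion, hmono.measure_iUnion, lt_iSup_iff] at h
  obtain ⟨n, hn⟩ := h
  exact ⟨_, lt_add_of_pos_right t (by positivity), hn⟩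

section decRe

variable {X : Type*} [MeasurableSpace X] {μ : Measure X} {f h : X → ℝ} {C s t : ℝ}

theorem decRe_nonneg (μ : Measure X) (f : X → ℝ) (s : ℝ) : 0 ≤ decRe μ f s :=
  Real.sSup_nonneg fun _ ht => ht.1

theorem le_decRe (hC : ∀ x, f x ≤ C) (hs : 0 ≤ s) (ht : 0 ≤ t)
    (hts : s < (μ {x | t < f x}).toReal) : t ≤ decRe μ f s := by
  refine le_csSup ⟨C, fun t' ⟨_, hts'⟩ => ?_⟩ ⟨ht, hts⟩
  have hne : μ {x | t' < f x} ≠ 0 := fun h0 => by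
    rw [h0, ENNReal.toReal_zero] at hts'
    linarith
  obtain ⟨x, hx⟩ := nonempty_of_measure_ne_zero hne
  exact (lt_of_lt_of_le hx (hC x)).le

theorem decRe_antitoneOn (hC : ∀ x, f x ≤ C) : AntitoneOn (decRe μ f) (Ici 0) :=
  fun _ hs _ _ hss' => Real.sSup_le (fun _ ht => le_decRe hC hs ht.1 (hss'.trans_lt ht.2))
    (decRe_nonneg μ f _)

theorem intervalIntegrable_decRe (hC : ∀ x, f x ≤ C) {a b : ℝ} (ha : 0 ≤ a) (hb : 0 ≤ b) :
    IntervalIntegrable (decRe μ f) volume a b :=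
  ((decRe_antitoneOn hC).mono fun _ hx => (le_min ha hb).trans hx.1).intervalIntegrable

theorem lt_decRe_iff [IsFiniteMeasure μ] (hC : ∀ x, f x ≤ C) (hs : 0 ≤ s) (ht : 0 ≤ t) :
    t < decRe μ f s ↔ s < (μ {x | t < f x}).toReal := by
  constructor
  · intro hlt
    have hne : {t' : ℝ | 0 ≤ t' ∧ s < (μ {x | t' < f x}).toReal}.Nonempty := by
      by_contra hemp
      rw [not_nonempty_iff_eq_empty] at hemp
      rw [decRe, hemp, Real.sSup_empty] at hlt
      linarith
    obtain ⟨t', ht', htt'⟩ := exists_lt_of_lt_csSup hne hlt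
    exact ht'.2.trans_le <| ENNReal.toReal_mono (measure_ne_top μ _)
      (measure_mono fun x hx => htt'.trans hx)
  · intro hlt
    rw [← ENNReal.ofReal_lt_iff_lt_toReal hs (measure_ne_top μ _)] at hlt
    obtain ⟨t', htt', hlt'⟩ := exists_gt_lt_measure_setOf_lt hlt
    rw [ENNReal.ofReal_lt_iff_lt_toReal hs (measure_ne_top μ _)] at hlt'
    exact htt'.trans_le (le_decRe hC hs (ht.trans htt'.le) hlt')

theorem decRe_mono_ae [IsFiniteMeasure μ] (hfh : f ≤ᵐ[μ] h) (hC : ∀ x, h x ≤ C) (hs : 0 ≤ s) :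
    decRe μ f s ≤ decRe μ h s := by
  refine Real.sSup_le (fun t ht => le_decRe hC hs ht.1 (ht.2.trans_le ?_)) (decRe_nonneg μ h s)
  refine ENNReal.toReal_mono (measure_ne_top μ _) (measure_mono_ae ?_)
  filter_upwards [hfh] with x hx hxt
  exact lt_of_lt_of_le hxt hx

theorem decRe_max_const [IsProbabilityMeasure μ] (hC : ∀ x, f x ≤ C) (c : ℝ)
    (hs : s ∈ Ico 0 1) : decRe μ (fun x => max (f x) c) s = max (decRe μ f s) c := by
  have hgC : ∀ x, max (f x) c ≤ max C c := fun x => max_le_max (hC x) le_rfl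
  have key : ∀ t, 0 ≤ t → (t < decRe μ (fun x => max (f x) c) s ↔ t < max (decRe μ f s) c) := by
    intro t ht
    rw [lt_decRe_iff hgC hs.1 ht, lt_max_iff, lt_decRe_iff hC hs.1 ht]
    rcases lt_or_ge t c with htc | hct
    · simp [htc, hs.2]
    · simp [not_lt.2 hct]
  have hg0 := decRe_nonneg μ (fun x => max (f x) c) s
  have hf0 : 0 ≤ max (decRe μ f s) c := (decRe_nonneg μ f s).trans (le_max_left _ _)
  exact le_antisymm (not_lt.1 fun hlt => (key _ hf0).1 hlt |>.false)
    (not_lt.1 fun hlt => (key _ hg0).2 hlt |>.false)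

theorem integral_decRe [IsProbabilityMeasure μ] (hf : Measurable f) (hC : ∀ x, f x ≤ C)
    (hpos : ∀ x, 0 ≤ f x) : ∫ s in (0 : ℝ)..1, decRe μ f s = ∫ x, f x ∂μ := by
  have hmeas : AEMeasurable (decRe μ f) (volume.restrict (Ioc 0 1)) :=
    aemeasurable_restrict_of_antitoneOn measurableSet_Ioc
      ((decRe_antitoneOn hC).mono fun _ hx => hx.1.le)
  have hlevel : ∀ t ∈ Ioi (0 : ℝ),
      volume.restrict (Ioc 0 1) {s | t < decRe μ f s} = μ {x | t < f x} := by
    intro t ht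
    have hle1 : (μ {x | t < f x}).toReal ≤ 1 := by
      simpa using ENNReal.toReal_mono ENNReal.one_ne_top (prob_le_one (s := {x | t < f x}))
    have hset : {s | t < decRe μ f s} ∩ Ioc 0 1 = Ioo 0 (μ {x | t < f x}).toReal := by
      ext s
      simp only [mem_inter_iff, mem_Ioc, mem_Ioo]
      constructor
      · rintro ⟨hts, hs0, -⟩
        exact ⟨hs0, (lt_decRe_iff hC hs0.le (le_of_lt ht)).1 hts⟩
      · rintro ⟨hs0, hsm⟩
        exact ⟨(lt_decRe_iff hC hs0.le (le_of_lt ht)).2 hsm, hs0, hsm.le.trans hle1⟩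
    rw [Measure.restrict_apply' measurableSet_Ioc, hset, Real.volume_Ioo, sub_zero,
      ENNReal.ofReal_toReal (measure_ne_top μ _)]
  rw [intervalIntegral.integral_of_le zero_le_one,
    integral_eq_lintegral_of_nonneg_ae (.of_forall (decRe_nonneg μ f)) hmeas.aestronglyMeasurable,
    integral_eq_lintegral_of_nonneg_ae (.of_forall hpos) hf.aestronglyMeasurable,
    lintegral_eq_lintegral_meas_lt _ (.of_forall (decRe_nonneg μ f)) hmeas,
    lintegral_eq_lintegral_meas_lt _ (.of_forall hpos) hf.aemeasurable,
    setLIntegral_congr_fun measurableSet_Ioi hlevel]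

end decRe

theorem waterfilling_submajorized_general {X : Type*} [MeasurableSpace X] (μ : Measure X)
    [IsProbabilityMeasure μ] (f h : X → ℝ) (hf : Measurable f) (hh : Measurable h)
    (hfb : ∃ C : ℝ, ∀ x, f x ≤ C) (hhb : ∃ C : ℝ, ∀ x, h x ≤ C)
    (hfpos : ∀ x, 0 ≤ f x) (hhpos : ∀ x, 0 ≤ h x)
    (hfh : ∀ᵐ x ∂μ, f x ≤ h x)
    (v : ℝ) (hv2 : v ≤ ∫ x, h x ∂μ)
    (c : ℝ) (hcv : (∫ x, max (f x) c ∂μ) = v) :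
    SubMaj μ (fun x => max (f x) c) h := by
  obtain ⟨C, hC⟩ := hfb
  obtain ⟨D, hD⟩ := hhb
  have hgC : ∀ x, max (f x) c ≤ max C c := fun x => max_le_max (hC x) le_rfl
  have hg_decRe : ∀ s ∈ Ioo (0 : ℝ) 1,
      decRe μ (fun x => max (f x) c) s = max (decRe μ f s) c :=
    fun s hs => decRe_max_const hC c ⟨hs.1.le, hs.2⟩
  intro r hr
  refine intervalIntegral_le_of_le_max_of_antitoneOn (c := c)
    (intervalIntegrable_decRe hgC le_rfl zero_le_one) (intervalIntegrable_decRe hD le_rfl zero_le_one)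
    ((decRe_antitoneOn hD).mono fun _ hs => hs.1.le) (fun s hs => ?_) (fun s hs => ?_) ?_ hr
  · exact (hg_decRe s hs).symm ▸ le_max_right _ _
  · exact (hg_decRe s hs).symm ▸ max_le_max (decRe_mono_ae hfh hD hs.1.le) le_rfl
  · calc ∫ s in (0 : ℝ)..1, decRe μ (fun x => max (f x) c) s
        = v := (integral_decRe (hf.max measurable_const) hgC fun x =>
          (hfpos x).trans (le_max_left _ _)).trans hcv
      _ ≤ ∫ x, h x ∂μ := hv2
      _ = ∫ s in (0 : ℝ)..1, decRe μ h s := (integral_decRe hh hD hhpos).symm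

/-- the waterfilling of `f` at the level `c = c(v)` is submajorized by any
`h ≥ f` with `∫ f ≤ v ≤ ∫ h`. -/
theorem waterfilling_submajorized {X : Type*} [MeasurableSpace X] (μ : Measure X)
    [IsProbabilityMeasure μ] (f h : X → ℝ) (hf : Measurable f) (hh : Measurable h)
    (hfb : ∃ C : ℝ, ∀ x, f x ≤ C) (hhb : ∃ C : ℝ, ∀ x, h x ≤ C)
    (hfpos : ∀ x, 0 ≤ f x) (hhpos : ∀ x, 0 ≤ h x)
    (hfh : ∀ᵐ x ∂μ, f x ≤ h x)
    (v : ℝ) (hv1 : (∫ x, f x ∂μ) ≤ v) (hv2 : v ≤ ∫ x, h x ∂μ)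
    (c : ℝ) (hc : essInf f μ ≤ c) (hcv : (∫ x, max (f x) c ∂μ) = v) :
    SubMaj μ (fun x => max (f x) c) h :=
  waterfilling_submajorized_general μ f h hf hh hfb hhb hfpos hhpos hfh v hv2 c hcv
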